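/- arXiv:2312.16404 — 2 statements merged into one kernel-verified Lean document; each statement's English description precedes it below -/
import Mathlib

section
/- Let n ≥ 2 be an integer, a ∈ B_n, ξ ∈ ∂B_n and c > 0. Then the function f(x) = c · [φ_a(x), a]^{n−2} · P_ξ(φ_a(x)) is positive and harmonic on B_n and satisfies the equality |(|x|²−1)∇f(x) + (n−2) x f(x)| = n f(x) for all x ∈ B_n. -/
open Metric EuclideanSpace Real

/-- The quantity `[x,a] = (1 + |a|²|x|² − 2⟨a,x⟩)^{1/2}` (equal to the Clifford norm `|1 − x·ā|`). -/
noncomputable def bracket {n : ℕ} (x a : EuclideanSpace ℝ (Fin n)) : ℝ :=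
  Real.sqrt (1 + ‖a‖ ^ 2 * ‖x‖ ^ 2 - 2 * inner ℝ a x)

/-- The Möbius transformation `φ_a(x) = ((1−|a|²)(a−x) + |a−x|² a)/[x,a]²` of the unit ball. -/
noncomputable def phi {n : ℕ} (a x : EuclideanSpace ℝ (Fin n)) : EuclideanSpace ℝ (Fin n) :=
  ((bracket x a) ^ 2)⁻¹ • ((1 - ‖a‖ ^ 2) • (a - x) + ‖a - x‖ ^ 2 • a)

/-- The Laplacian `Δf(x) = ∑ i ∂²f/∂x_i²(x)` of a (possibly vector-valued) function. -/
noncomputable def lap {n : ℕ} {F : Type*} [NormedAddCommGroup F] [NormedSpace ℝ F]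
    (f : EuclideanSpace ℝ (Fin n) → F) (x : EuclideanSpace ℝ (Fin n)) : F :=
  ∑ i : Fin n,
    fderiv ℝ (fderiv ℝ f) x (EuclideanSpace.single i (1 : ℝ)) (EuclideanSpace.single i (1 : ℝ))

/-- `f` is harmonic on the open unit ball: it is `C²` there and satisfies Laplace's equation. -/
def IsHarmonicOnBall {n : ℕ} {F : Type*} [NormedAddCommGroup F] [NormedSpace ℝ F]
    (f : EuclideanSpace ℝ (Fin n) → F) : Prop :=
  ContDiffOn ℝ 2 f (ball 0 1) ∧
    ∀ x ∈ ball (0 : EuclideanSpace ℝ (Fin n)) 1, lap f x = 0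

/-- The hyperbolic metric `d_{B_n}(x,y) = 2 tanh⁻¹(|φ_y(x)|) = log((1+|φ_y(x)|)/(1−|φ_y(x)|))`. -/
noncomputable def hypDist {n : ℕ} (x y : EuclideanSpace ℝ (Fin n)) : ℝ :=
  Real.log ((1 + ‖phi y x‖) / (1 - ‖phi y x‖))

/-- The Poisson kernel `P_ξ(x) = (1−|x|²)/|x−ξ|^n`. -/
noncomputable def poisson {n : ℕ} (ξ x : EuclideanSpace ℝ (Fin n)) : ℝ :=
  (1 - ‖x‖ ^ 2) / ‖x - ξ‖ ^ n

/-- The volume of the unit ball in `ℝ^k`. -/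
noncomputable def volB (k : ℕ) : ℝ :=
  (MeasureTheory.volume (ball (0 : EuclideanSpace ℝ (Fin k)) 1)).toReal

/-!
The Möbius map `φ_a` transports Poisson kernels: with `ζ = φ_a(ξ)`, again a point of the unit
sphere, `[φ_a(x), a]^(n-2) P_ξ(φ_a(x)) = (1 - |a|²)^(n-1) [ξ,a]^(-n) P_ζ(x)`. So `f` is a positive
multiple of `P_ζ(x) = (1 - |x|²) |x - ζ|^(-n)`, whose gradient is
`-2 |x - ζ|^(-n) x - n (1 - |x|²) |x - ζ|^(-n-2) (x - ζ)`. The Laplacian is the trace of the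
derivative of this field, and it vanishes by a direct computation. Finally
`(|x|² - 1) ∇P_ζ + (n - 2) x P_ζ = n (1 - |x|²) |x - ζ|^(-n-2) (|x - ζ|² x + (1 - |x|²)(x - ζ))`,
and the last vector has length `|x - ζ|²` because `|ζ| = 1`.
-/

open scoped RealInnerProductSpace Topology

section BallPoisson

variable {E : Type*} [NormedAddCommGroup E]

noncomputable def ballPoisson (s : ℝ) (ζ x : E) : ℝ :=
  (1 - ‖x‖ ^ 2) * (‖x - ζ‖ ^ 2) ^ (-s / 2)

lemma ballPoisson_pos (s : ℝ) {ζ x : E} (hx : ‖x‖ < 1) (hxζ : x ≠ ζ) :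
    0 < ballPoisson s ζ x := by
  have hg : 0 < ‖x - ζ‖ := norm_sub_pos_iff.2 hxζ
  have hu : 0 < 1 - ‖x‖ ^ 2 := by nlinarith [norm_nonneg x]
  unfold ballPoisson
  positivity

variable [InnerProductSpace ℝ E]

noncomputable def ballPoissonGrad (s : ℝ) (ζ x : E) : E :=
  (-2 * (‖x - ζ‖ ^ 2) ^ (-s / 2)) • x +
    (-s * (1 - ‖x‖ ^ 2) * (‖x - ζ‖ ^ 2) ^ (-s / 2 - 1)) • (x - ζ)

lemma hasFDerivAt_one_sub_norm_sq (x : E) :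
    HasFDerivAt (fun y : E => 1 - ‖y‖ ^ 2) ((-2 : ℝ) • innerSL ℝ x) x := by
  refine ((hasStrictFDerivAt_norm_sq x).hasFDerivAt.const_sub 1).congr_fderiv ?_
  ext v
  simp

lemma hasFDerivAt_norm_sub_sq_rpow {ζ x : E} (p : ℝ) (hx : x ≠ ζ) :
    HasFDerivAt (fun y => (‖y - ζ‖ ^ 2) ^ p)
      ((2 * p * (‖x - ζ‖ ^ 2) ^ (p - 1)) • innerSL ℝ (x - ζ)) x := by
  have hg : ‖x - ζ‖ ^ 2 ≠ 0 := by simpa [sub_eq_zero] using hx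
  refine (((hasFDerivAt_id x).sub_const ζ).norm_sq.rpow_const (Or.inl hg)).congr_fderiv ?_
  ext v
  simp only [id_eq, map_sub, ContinuousLinearMap.comp_id, smul_apply, sub_apply,
    coe_innerSL_apply, nsmul_eq_mul, Nat.cast_ofNat, smul_eq_mul]
  ring

lemma hasGradientAt_ballPoisson [CompleteSpace E] (s : ℝ) {ζ x : E} (hx : x ≠ ζ) :
    HasGradientAt (ballPoisson s ζ) (ballPoissonGrad s ζ x) x := by
  rw [hasGradientAt_iff_hasFDerivAt]
  refine ((hasFDerivAt_one_sub_norm_sq x).mul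
    (hasFDerivAt_norm_sub_sq_rpow (-s / 2) hx)).congr_fderiv ?_
  ext v
  simp only [ballPoissonGrad, InnerProductSpace.toDual_apply_apply, add_apply, smul_apply,
    coe_innerSL_apply, smul_eq_mul, inner_add_left, real_inner_smul_left]
  ring

lemma contDiffAt_ballPoisson {k : WithTop ℕ∞} (s : ℝ) {ζ x : E} (hx : x ≠ ζ) :
    ContDiffAt ℝ k (ballPoisson s ζ) x := by
  have hg : ‖x - ζ‖ ^ 2 ≠ 0 := by simpa [sub_eq_zero] using hx
  exact (contDiffAt_const.sub (contDiff_norm_sq ℝ).contDiffAt).mul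
    (((contDiff_norm_sq ℝ).comp (contDiff_id.sub contDiff_const)).contDiffAt.rpow_const_of_ne hg)

lemma norm_smul_ballPoissonGrad_add_smul {s : ℝ} {ζ x : E} (hs : 0 ≤ s) (hζ : ‖ζ‖ = 1)
    (hx : ‖x‖ ≤ 1) (hxζ : x ≠ ζ) :
    ‖(‖x‖ ^ 2 - 1) • ballPoissonGrad s ζ x + ((s - 2) * ballPoisson s ζ x) • x‖ =
      s * ballPoisson s ζ x := by
  set g := ‖x - ζ‖ ^ 2 with hg_def
  set u := 1 - ‖x‖ ^ 2 with hu_def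
  have hg : 0 < g := by have := norm_sub_pos_iff.2 hxζ; positivity
  have hu : 0 ≤ u := by nlinarith [norm_nonneg x]
  have hpow : g ^ (-s / 2) = g ^ (-s / 2 - 1) * g := by
    rw [← Real.rpow_add_one hg.ne', sub_add_cancel]
  have hnorm : ‖g • x + u • (x - ζ)‖ = g := by
    refine (sq_eq_sq₀ (norm_nonneg _) hg.le).1 ?_
    have hxζ' : ⟪x, ζ⟫ = (‖x‖ ^ 2 + 1 - g) / 2 := by
      rw [hg_def, norm_sub_sq_real, hζ]; ring
    rw [norm_add_sq_real, norm_smul, norm_smul, real_inner_smul_left, real_inner_smul_right,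
      Real.norm_of_nonneg hg.le, Real.norm_of_nonneg hu, inner_sub_right,
      real_inner_self_eq_norm_sq, hxζ', mul_pow, mul_pow, ← hg_def, hu_def]
    ring
  have hvec : (‖x‖ ^ 2 - 1) • ballPoissonGrad s ζ x + ((s - 2) * ballPoisson s ζ x) • x =
      (s * u * g ^ (-s / 2 - 1)) • (g • x + u • (x - ζ)) := by
    simp only [ballPoissonGrad, ballPoisson, ← hg_def, ← hu_def, hpow]
    match_scalars <;> ring
  rw [hvec, norm_smul, hnorm, Real.norm_of_nonneg (by positivity), ballPoisson, ← hg_def,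
    ← hu_def, hpow]
  ring

end BallPoisson

section EuclideanBall

variable {n : ℕ}

local notation "E" => EuclideanSpace ℝ (Fin n)

lemma lap_eq_trace_of_hasGradientAt {f : E → ℝ} {G : E → E} {G' : E →L[ℝ] E} {x : E}
    (hf : ∀ᶠ y in 𝓝 x, HasGradientAt f (G y) y) (hG : HasFDerivAt G G' x) :
    lap f x = LinearMap.trace ℝ E G' := by
  have hDf : fderiv ℝ f =ᶠ[𝓝 x] fun y => innerSL ℝ (G y) := by
    filter_upwards [hf] with y hy
    exact hy.hasFDerivAt.fderiv
  have hD2f : fderiv ℝ (fderiv ℝ f) x = (innerSL ℝ).comp G' :=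
    hDf.fderiv_eq.trans ((innerSL ℝ).hasFDerivAt.comp x hG).fderiv
  rw [lap, hD2f, LinearMap.trace_eq_sum_inner _ (EuclideanSpace.basisFun (Fin n) ℝ)]
  simp [real_inner_comm]

lemma lap_eq_of_hasGradientAt_smul_add_smul {f α β : E → ℝ} {α' β' : E →L[ℝ] ℝ} {ζ x : E}
    (hf : ∀ᶠ y in 𝓝 x, HasGradientAt f (α y • y + β y • (y - ζ)) y)
    (hα : HasFDerivAt α α' x) (hβ : HasFDerivAt β β' x) :
    lap f x = n * (α x + β x) + α' x + β' (x - ζ) := by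
  rw [lap_eq_trace_of_hasGradientAt hf
    ((hα.smul (hasFDerivAt_id x)).add (hβ.smul ((hasFDerivAt_id x).sub_const ζ)))]
  simp only [ContinuousLinearMap.toLinearMap_add, ContinuousLinearMap.toLinearMap_smul,
    ContinuousLinearMap.coe_id, ContinuousLinearMap.coe_smulRight, map_add, map_smul,
    LinearMap.trace_id, finrank_euclideanSpace, Fintype.card_fin, LinearMap.trace_smulRight,
    ContinuousLinearMap.coe_coe, smul_eq_mul, id_eq]
  ring

lemma Filter.EventuallyEq.lap_eq {f g : E → ℝ} {x : E} (h : f =ᶠ[𝓝 x] g) :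
    lap f x = lap g x := by
  rw [lap, lap, h.fderiv.fderiv_eq]

lemma lap_const_mul (c : ℝ) (f : E → ℝ) (x : E) :
    lap (fun y => c * f y) x = c * lap f x := by
  have h : (fun y => c * f y) = c • f := rfl
  rw [lap, lap, h, fderiv_const_smul_field, fderiv_const_smul_field (F := E →L[ℝ] ℝ),
    Finset.mul_sum]
  rfl

lemma lap_ballPoisson {ζ x : E} (hζ : ‖ζ‖ = 1) (hx : x ≠ ζ) : lap (ballPoisson n ζ) x = 0 := by
  have hgrad : ∀ᶠ y in 𝓝 x, HasGradientAt (ballPoisson n ζ) (ballPoissonGrad n ζ y) y :=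
    (isOpen_ne.eventually_mem hx).mono fun y hy => hasGradientAt_ballPoisson n hy
  rw [lap_eq_of_hasGradientAt_smul_add_smul hgrad
    ((hasFDerivAt_norm_sub_sq_rpow (-(n : ℝ) / 2) hx).const_mul (-2))
    (((hasFDerivAt_one_sub_norm_sq x).const_mul (-(n : ℝ))).mul
      (hasFDerivAt_norm_sub_sq_rpow (-(n : ℝ) / 2 - 1) hx))]
  set g := ‖x - ζ‖ ^ 2 with hg_def
  have hg : g ≠ 0 := by simpa [hg_def, sub_eq_zero] using hx
  have hpow : ∀ p : ℝ, g ^ p = g ^ (p - 1) * g := fun p => by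
    rw [← Real.rpow_add_one hg, sub_add_cancel]
  have hxζ : ⟪x, ζ⟫ = (‖x‖ ^ 2 + 1 - g) / 2 := by
    rw [hg_def, norm_sub_sq_real, hζ]; ring
  simp only [add_apply, smul_apply, smul_eq_mul, innerSL_apply_apply, inner_sub_left,
    inner_sub_right, real_inner_self_eq_norm_sq, real_inner_comm x ζ, hxζ, hζ]
  rw [hpow (-(n : ℝ) / 2), hpow (-(n : ℝ) / 2 - 1)]
  ring

lemma sq_bracket (x a : E) : bracket x a ^ 2 = 1 + ‖a‖ ^ 2 * ‖x‖ ^ 2 - 2 * ⟪a, x⟫ := by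
  refine Real.sq_sqrt ?_
  nlinarith [real_inner_le_norm a x, sq_nonneg (1 - ‖a‖ * ‖x‖)]

lemma bracket_nonneg (x a : E) : 0 ≤ bracket x a := Real.sqrt_nonneg _

lemma bracket_pos {x a : E} (h : ‖a‖ * ‖x‖ < 1) : 0 < bracket x a := by
  refine Real.sqrt_pos.2 ?_
  nlinarith [real_inner_le_norm a x, norm_nonneg a, norm_nonneg x]

lemma inner_phi (a x v : E) :
    ⟪phi a x, v⟫ =
      ((1 - ‖a‖ ^ 2) * (⟪a, v⟫ - ⟪x, v⟫) + ‖a - x‖ ^ 2 * ⟪a, v⟫) / bracket x a ^ 2 := by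
  rw [phi, real_inner_smul_left, inner_add_left, real_inner_smul_left, real_inner_smul_left,
    inner_sub_left, div_eq_inv_mul]

lemma norm_phi_sq {a x : E} (h : bracket x a ≠ 0) :
    ‖phi a x‖ ^ 2 = ‖a - x‖ ^ 2 / bracket x a ^ 2 := by
  have hv : ∀ v, ⟪v, phi a x⟫ = ⟪phi a x, v⟫ := fun v => real_inner_comm _ _
  rw [← real_inner_self_eq_norm_sq, inner_phi, hv, inner_phi, hv, inner_phi,
    real_inner_self_eq_norm_sq, real_inner_self_eq_norm_sq, real_inner_comm a x]
  have hB := sq_bracket x a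
  have h2 : bracket x a ^ 2 ≠ 0 := pow_ne_zero 2 h
  generalize bracket x a ^ 2 = B at hB h2 ⊢
  field_simp
  rw [hB, norm_sub_sq_real]
  ring

lemma one_sub_norm_phi_sq {a x : E} (h : bracket x a ≠ 0) :
    1 - ‖phi a x‖ ^ 2 = (1 - ‖a‖ ^ 2) * (1 - ‖x‖ ^ 2) / bracket x a ^ 2 := by
  have hB := sq_bracket x a
  have h2 : bracket x a ^ 2 ≠ 0 := pow_ne_zero 2 h
  rw [norm_phi_sq h]
  generalize bracket x a ^ 2 = B at hB h2 ⊢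
  field_simp
  rw [hB, norm_sub_sq_real]
  ring

lemma bracket_phi {a x : E} (ha : ‖a‖ ≤ 1) (h : bracket x a ≠ 0) :
    bracket (phi a x) a = (1 - ‖a‖ ^ 2) / bracket x a := by
  have hK : 0 ≤ 1 - ‖a‖ ^ 2 := by nlinarith [norm_nonneg a]
  refine (sq_eq_sq₀ (bracket_nonneg _ _) (div_nonneg hK (bracket_nonneg _ _))).1 ?_
  rw [sq_bracket, norm_phi_sq h, real_inner_comm, inner_phi, div_pow, real_inner_self_eq_norm_sq,
    real_inner_comm a x]
  have hB := sq_bracket x a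
  have h2 : bracket x a ^ 2 ≠ 0 := pow_ne_zero 2 h
  generalize bracket x a ^ 2 = B at hB h2 ⊢
  field_simp
  rw [hB, norm_sub_sq_real]
  ring

lemma norm_phi_of_norm_eq_one {a ξ : E} (ha : ‖a‖ < 1) (hξ : ‖ξ‖ = 1) : ‖phi a ξ‖ = 1 := by
  have hξa : bracket ξ a ≠ 0 := (bracket_pos (by rwa [hξ, mul_one])).ne'
  have hB : bracket ξ a ^ 2 = ‖a - ξ‖ ^ 2 := by rw [sq_bracket, norm_sub_sq_real, hξ]; ring
  refine (sq_eq_sq₀ (norm_nonneg _) zero_le_one).1 ?_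
  rw [norm_phi_sq hξa, ← hB, div_self (pow_ne_zero 2 hξa), one_pow]

lemma norm_phi_sub {a ξ x : E} (hξ : ‖ξ‖ = 1) (hx : bracket x a ≠ 0) (hξa : bracket ξ a ≠ 0) :
    ‖phi a x - ξ‖ = bracket ξ a * ‖x - phi a ξ‖ / bracket x a := by
  refine (sq_eq_sq₀ (norm_nonneg _)
    (div_nonneg (mul_nonneg (bracket_nonneg _ _) (norm_nonneg _)) (bracket_nonneg _ _))).1 ?_
  rw [div_pow, mul_pow, norm_sub_sq_real, norm_sub_sq_real, norm_phi_sq hx, norm_phi_sq hξa,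
    inner_phi, show ⟪x, phi a ξ⟫ = ⟪phi a ξ, x⟫ from real_inner_comm _ _, inner_phi,
    norm_sub_sq_real a x, norm_sub_sq_real a ξ, hξ, real_inner_comm ξ x]
  have hBx := sq_bracket x a
  have hBξ := sq_bracket ξ a
  have hx2 : bracket x a ^ 2 ≠ 0 := pow_ne_zero 2 hx
  have hξ2 : bracket ξ a ^ 2 ≠ 0 := pow_ne_zero 2 hξa
  generalize bracket x a ^ 2 = Bx at hBx hx2 ⊢
  generalize bracket ξ a ^ 2 = Bξ at hBξ hξ2 ⊢
  rw [hξ] at hBξ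
  field_simp
  rw [hBx, hBξ]
  ring

lemma poisson_eq_ballPoisson (ζ x : E) : poisson ζ x = ballPoisson n ζ x := by
  rw [poisson, ballPoisson, div_eq_mul_inv, ← Real.rpow_natCast ‖x - ζ‖ 2,
    ← Real.rpow_mul (norm_nonneg _), ← Real.rpow_natCast ‖x - ζ‖ n,
    ← Real.rpow_neg (norm_nonneg _)]
  ring_nf

lemma bracket_pow_mul_poisson_phi (hn : 2 ≤ n) {a ξ x : E} (ha : ‖a‖ < 1) (hξ : ‖ξ‖ = 1)
    (hx : ‖x‖ < 1) :
    bracket (phi a x) a ^ (n - 2) * poisson ξ (phi a x) =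
      (1 - ‖a‖ ^ 2) ^ (n - 1) / bracket ξ a ^ n * poisson (phi a ξ) x := by
  have hξa : bracket ξ a ≠ 0 := (bracket_pos (by rwa [hξ, mul_one])).ne'
  have hxa : bracket x a ≠ 0 := (bracket_pos (by nlinarith [norm_nonneg a, norm_nonneg x])).ne'
  have hxζ : ‖x - phi a ξ‖ ≠ 0 := by
    rw [norm_ne_zero_iff, sub_ne_zero]
    rintro rfl
    rw [norm_phi_of_norm_eq_one ha hξ] at hx
    exact lt_irrefl _ hx
  rw [poisson, poisson, bracket_phi ha.le hxa, one_sub_norm_phi_sq hxa, norm_phi_sub hξ hxa hξa]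
  obtain ⟨m, rfl⟩ : ∃ m, n = m + 2 := ⟨n - 2, by omega⟩
  rw [show m + 2 - 1 = m + 1 by omega, Nat.add_sub_cancel]
  simp only [div_pow, mul_pow]
  field_simp
  ring

theorem extremal_of_eqOn_const_mul_ballPoisson {f : E → ℝ} {K : ℝ} {ζ : E} (hK : 0 < K)
    (hζ : ‖ζ‖ = 1) (hf : Set.EqOn f (fun x => K * ballPoisson n ζ x) (ball 0 1)) :
    (∀ x ∈ ball (0 : E) 1, 0 < f x) ∧ IsHarmonicOnBall f ∧
      ∀ x ∈ ball (0 : E) 1,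
        ‖(‖x‖ ^ 2 - 1) • gradient f x + (((n : ℝ) - 2) * f x) • x‖ = n * f x := by
  have hball : ∀ x ∈ ball (0 : E) 1, ‖x‖ < 1 ∧ x ≠ ζ := fun x hx => by
    rw [mem_ball_zero_iff] at hx
    exact ⟨hx, by rintro rfl; linarith⟩
  have hev : ∀ x ∈ ball (0 : E) 1, f =ᶠ[𝓝 x] fun y => K * ballPoisson n ζ y := fun x hx =>
    Filter.eventuallyEq_of_mem (isOpen_ball.mem_nhds hx) hf
  refine ⟨fun x hx => ?_, ⟨fun x hx => ?_, fun x hx => ?_⟩, fun x hx => ?_⟩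
  · rw [hf hx]
    exact mul_pos hK (ballPoisson_pos _ (hball x hx).1 (hball x hx).2)
  · exact (contDiffAt_const.mul (contDiffAt_ballPoisson _ (hball x hx).2)).contDiffWithinAt.congr
      hf (hf hx)
  · rw [(hev x hx).lap_eq, lap_const_mul, lap_ballPoisson hζ (hball x hx).2, mul_zero]
  · have hgrad : HasGradientAt f (K • ballPoissonGrad n ζ x) x := by
      refine HasFDerivAt.congr_of_eventuallyEq ?_ (hev x hx)
      rw [map_smulₛₗ]
      exact (hasGradientAt_ballPoisson _ (hball x hx).2).hasFDerivAt.const_mul K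
    have hvec : (‖x‖ ^ 2 - 1) • (K • ballPoissonGrad n ζ x) +
          (((n : ℝ) - 2) * (K * ballPoisson n ζ x)) • x =
        K • ((‖x‖ ^ 2 - 1) • ballPoissonGrad n ζ x + (((n : ℝ) - 2) * ballPoisson n ζ x) • x) := by
      module
    rw [hgrad.gradient, hf hx, hvec, norm_smul, Real.norm_of_nonneg hK.le,
      norm_smul_ballPoissonGrad_add_smul n.cast_nonneg hζ (hball x hx).1.le (hball x hx).2]
    ring

end EuclideanBall

/-- Every function `f(x) = c·[φ_a(x),a]^{n−2}·P_ξ(φ_a(x))` with `c > 0`, `a ∈ B_n` and `ξ` on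
the unit sphere is positive and harmonic on `B_n` and attains equality
`|(|x|²−1)∇f(x) + (n−2) x f(x)| = n f(x)` everywhere on `B_n`. -/
theorem extremal_function_attains_equality {n : ℕ} (hn : 2 ≤ n)
    (a ξ : EuclideanSpace ℝ (Fin n)) (ha : a ∈ ball (0 : EuclideanSpace ℝ (Fin n)) 1)
    (hξ : ‖ξ‖ = 1) (c : ℝ) (hc : 0 < c)
    (f : EuclideanSpace ℝ (Fin n) → ℝ)
    (hfdef : ∀ x, f x = c * (bracket (phi a x) a) ^ (n - 2) * poisson ξ (phi a x)) :
    (∀ x ∈ ball (0 : EuclideanSpace ℝ (Fin n)) 1, 0 < f x) ∧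
      IsHarmonicOnBall f ∧
      ∀ x ∈ ball (0 : EuclideanSpace ℝ (Fin n)) 1,
        ‖(‖x‖ ^ 2 - 1) • gradient f x + (((n : ℝ) - 2) * f x) • x‖ = (n : ℝ) * f x := by
  rw [mem_ball_zero_iff] at ha
  have hξa : 0 < bracket ξ a := bracket_pos (by rwa [hξ, mul_one])
  have ha2 : 0 < 1 - ‖a‖ ^ 2 := by nlinarith [norm_nonneg a]
  refine extremal_of_eqOn_const_mul_ballPoisson
    (K := c * ((1 - ‖a‖ ^ 2) ^ (n - 1) / bracket ξ a ^ n)) (by positivity)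
    (norm_phi_of_norm_eq_one ha hξ) fun x hx => ?_
  rw [hfdef, mul_assoc, bracket_pow_mul_poisson_phi hn ha hξ (mem_ball_zero_iff.1 hx),
    poisson_eq_ballPoisson]
  exact (mul_assoc _ _ _).symm
end

section
/- Let n ≥ 2 and let x, y be points of the open unit ball B_n of ℝ^n with |x| ≥ |y|. Then (1 + |x|²|y|² − 2⟨x,y⟩)^{1/2} + |x − y| ≥ 1 − |y|². -/
/-!
Write `a = ‖x‖`, `b = ‖y‖`, `d = ‖x - y‖`. Then `[x,y]² = d² + (1 - a²)(1 - b²)`, and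
`a² - b² ≤ |a - b| (a + b) ≤ 2d` on the unit ball, so
`[x,y]² ≥ d² + (1 - b² - 2d)(1 - b²) = (1 - b² - d)²`, hence `[x,y] ≥ 1 - b² - d`.
-/

open Metric EuclideanSpace Real

theorem one_add_sq_norm_mul_sq_norm_sub_two_inner {E : Type*} [NormedAddCommGroup E]
    [InnerProductSpace ℝ E] (x y : E) :
    1 + ‖x‖ ^ 2 * ‖y‖ ^ 2 - 2 * inner ℝ x y = ‖x - y‖ ^ 2 + (1 - ‖x‖ ^ 2) * (1 - ‖y‖ ^ 2) := by
  rw [norm_sub_sq_real]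
  ring

theorem sq_norm_sub_sq_norm_le_two_mul_norm_sub {E : Type*} [SeminormedAddCommGroup E] {x y : E}
    (hx : ‖x‖ ≤ 1) (hy : ‖y‖ ≤ 1) : ‖x‖ ^ 2 - ‖y‖ ^ 2 ≤ 2 * ‖x - y‖ := by
  obtain ⟨hyx, hxy⟩ := abs_le.mp (abs_norm_sub_norm_le x y)
  nlinarith [norm_nonneg x, norm_nonneg y]

theorem le_sqrt_sq_add_mul_add {c d e : ℝ} (hc : 0 ≤ c) (h : c - 2 * d ≤ e) :
    c ≤ √(d ^ 2 + e * c) + d := by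
  have hsq : (c - d) ^ 2 ≤ d ^ 2 + e * c := by nlinarith
  linarith [Real.le_sqrt_of_sq_le hsq]

theorem bracket_plus_dist_inequality_general {n : ℕ}
    (x y : EuclideanSpace ℝ (Fin n)) (hx : x ∈ ball (0 : EuclideanSpace ℝ (Fin n)) 1)
    (hy : y ∈ ball (0 : EuclideanSpace ℝ (Fin n)) 1) :
    1 - ‖y‖ ^ 2 ≤ Real.sqrt (1 + ‖x‖ ^ 2 * ‖y‖ ^ 2 - 2 * inner ℝ x y) + ‖x - y‖ := by
  rw [mem_ball_zero_iff] at hx hy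
  rw [one_add_sq_norm_mul_sq_norm_sub_two_inner]
  apply le_sqrt_sq_add_mul_add (by nlinarith [norm_nonneg y])
  linarith [sq_norm_sub_sq_norm_le_two_mul_norm_sub hx.le hy.le]

/-- For `x, y` in the unit ball with `|x| ≥ |y|`,
`(1 + |x|²|y|² − 2⟨x,y⟩)^{1/2} + |x − y| ≥ 1 − |y|²`. -/
theorem bracket_plus_dist_inequality {n : ℕ} (hn : 2 ≤ n)
    (x y : EuclideanSpace ℝ (Fin n)) (hx : x ∈ ball (0 : EuclideanSpace ℝ (Fin n)) 1)
    (hy : y ∈ ball (0 : EuclideanSpace ℝ (Fin n)) 1) (hxy : ‖y‖ ≤ ‖x‖) :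
    1 - ‖y‖ ^ 2 ≤ Real.sqrt (1 + ‖x‖ ^ 2 * ‖y‖ ^ 2 - 2 * inner ℝ x y) + ‖x - y‖ :=
  bracket_plus_dist_inequality_general x y hx hy
end
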